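/- arXiv:1904.04728 — 3 statements merged into one kernel-verified Lean document; each statement's English description precedes it below -/
import Mathlib

section
/- Let Γ be a group (countable discrete), and let f, h : Γ → ℂ be absolutely summable functions (i.e. ∑_{y} |f(y)| < ∞ and ∑_{y} |h(y)| < ∞). Then: (i) for every x ∈ Γ the family y ↦ f(y) h(y⁻¹x) is absolutely summable, so the convolution (f ⋆ h)(x) = ∑'_{y∈Γ} f(y) h(y⁻¹x) is well defined; (ii) f ⋆ h is absolutely summable; and (iii) for every γ ∈ Γ, the localized trace satisfies τ_γ(f ⋆ h) = τ_γ(h ⋆ f), that is, ∑'_{g ∈ (γ)} (f ⋆ h)(g) = ∑'_{g ∈ (γ)} (h ⋆ f)(g), where (γ) denotes the conjugacy class of γ. -/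
section Aux

variable {Γ : Type*} [Group Γ]

/-- The change-of-variables equivalence `(y, z) ↦ (y * z, y)`. -/
private def convEquiv : Γ × Γ ≃ Γ × Γ where
  toFun p := (p.1 * p.2, p.1)
  invFun p := (p.2, p.2⁻¹ * p.1)
  left_inv p := by simp
  right_inv p := by simp

private lemma summable_norm_conv {f h : Γ → ℂ}
    (hf : Summable fun y : Γ => ‖f y‖) (hh : Summable fun y : Γ => ‖h y‖) :
    Summable fun p : Γ × Γ => ‖f p.2 * h (p.2⁻¹ * p.1)‖ := by
  rw [← (convEquiv (Γ := Γ)).summable_iff]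
  have : ((fun p : Γ × Γ => ‖f p.2 * h (p.2⁻¹ * p.1)‖) ∘ ⇑(convEquiv (Γ := Γ))) =
      fun p : Γ × Γ => ‖f p.1‖ * ‖h p.2‖ := by
    funext p
    simp [convEquiv, norm_mul]
  rw [this]
  exact hf.mul_of_nonneg hh (fun _ => norm_nonneg _) (fun _ => norm_nonneg _)

private lemma isConj_mul_comm (a b : Γ) : IsConj (a * b) (b * a) :=
  isConj_iff.2 ⟨a⁻¹, by group⟩

/-- Key rewriting: the localized trace of a convolution as a sum over
pairs whose product lies in the conjugacy class. -/
private lemma trace_conv_eq (γ : Γ) {f h : Γ → ℂ}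
    (hf : Summable fun y : Γ => ‖f y‖) (hh : Summable fun y : Γ => ‖h y‖) :
    ∑' g : {g : Γ // IsConj γ g}, ∑' y : Γ, f y * h (y⁻¹ * (g : Γ)) =
      ∑' p : {p : Γ × Γ // IsConj γ (p.1 * p.2)}, f (p : Γ × Γ).1 * h (p : Γ × Γ).2 := by
  have hsum : Summable fun p : Γ × Γ => f p.2 * h (p.2⁻¹ * p.1) :=
    (summable_norm_conv hf hh).of_norm
  -- identify the index set `{g // IsConj γ g} × Γ` with a subtype of `Γ × Γ`
  let e : {g : Γ // IsConj γ g} × Γ ≃ {p : Γ × Γ // IsConj γ p.1} :=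
    { toFun := fun q => ⟨((q.1 : Γ), q.2), q.1.2⟩
      invFun := fun p => (⟨(p : Γ × Γ).1, p.2⟩, (p : Γ × Γ).2)
      left_inv := fun q => rfl
      right_inv := fun p => rfl }
  have hsub : Summable ((fun p : Γ × Γ => f p.2 * h (p.2⁻¹ * p.1)) ∘
      (Subtype.val : {p : Γ × Γ // IsConj γ p.1} → Γ × Γ)) :=
    hsum.subtype _
  have hsum2 : Summable fun q : {g : Γ // IsConj γ g} × Γ =>
      f q.2 * h (q.2⁻¹ * (q.1 : Γ)) :=
    (e.summable_iff (f := (fun p : Γ × Γ => f p.2 * h (p.2⁻¹ * p.1)) ∘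
      (Subtype.val : {p : Γ × Γ // IsConj γ p.1} → Γ × Γ))).2 hsub
  have h1 : ∑' g : {g : Γ // IsConj γ g}, ∑' y : Γ, f y * h (y⁻¹ * (g : Γ)) =
      ∑' q : {g : Γ // IsConj γ g} × Γ, f q.2 * h (q.2⁻¹ * (q.1 : Γ)) :=
    (Summable.tsum_prod hsum2).symm
  rw [h1]
  -- re-index `{g // IsConj γ g} × Γ ≃ {p : Γ × Γ // IsConj γ (p.1 * p.2)}`
  let e2 : {p : Γ × Γ // IsConj γ (p.1 * p.2)} ≃ {g : Γ // IsConj γ g} × Γ :=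
    { toFun := fun p => (⟨(p : Γ × Γ).1 * (p : Γ × Γ).2, p.2⟩, (p : Γ × Γ).1)
      invFun := fun q => ⟨(q.2, q.2⁻¹ * (q.1 : Γ)), by
        simpa [mul_inv_cancel_left] using q.1.2⟩
      left_inv := fun p => by
        apply Subtype.ext
        simp
      right_inv := fun q => by
        ext <;> simp }
  rw [← e2.tsum_eq (f := fun q : {g : Γ // IsConj γ g} × Γ =>
      f q.2 * h (q.2⁻¹ * (q.1 : Γ)))]
  refine tsum_congr fun p => ?_
  simp [e2, inv_mul_cancel_left]

end Aux

/-- For absolutely summable functions `f, h : Γ → ℂ` on a countable discrete group `Γ`: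
(i) the convolution `(f ⋆ h)(x) = ∑'_y f(y) h(y⁻¹x)` is defined by an absolutely summable
family for every `x`; (ii) `f ⋆ h` is absolutely summable; (iii) for every `γ ∈ Γ` the
localized trace over the conjugacy class of `γ` satisfies `τ_γ(f ⋆ h) = τ_γ(h ⋆ f)`. -/
theorem l1_convolution_localized_trace_tracial {Γ : Type*} [Group Γ] [Countable Γ]
    (f h : Γ → ℂ)
    (hf : Summable fun y : Γ => ‖f y‖) (hh : Summable fun y : Γ => ‖h y‖) :
    (∀ x : Γ, Summable fun y : Γ => ‖f y * h (y⁻¹ * x)‖) ∧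
    (Summable fun x : Γ => ‖∑' y : Γ, f y * h (y⁻¹ * x)‖) ∧
    (∀ γ : Γ,
      ∑' g : {g : Γ // IsConj γ g}, ∑' y : Γ, f y * h (y⁻¹ * (g : Γ)) =
        ∑' g : {g : Γ // IsConj γ g}, ∑' y : Γ, h y * f (y⁻¹ * (g : Γ))) := by
  have hnorm := summable_norm_conv hf hh
  refine ⟨fun x => hnorm.prod_factor x, ?_, ?_⟩
  · have hG : Summable fun x : Γ => ∑' y : Γ, ‖f y * h (y⁻¹ * x)‖ :=
      ((summable_prod_of_nonneg fun p => norm_nonneg _).1 hnorm).2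
    exact hG.of_nonneg_of_le (fun x => norm_nonneg _)
      (fun x => norm_tsum_le_tsum_norm (hnorm.prod_factor x))
  · intro γ
    rw [trace_conv_eq γ hf hh, trace_conv_eq γ hh hf]
    -- swap the two coordinates
    let sw : {p : Γ × Γ // IsConj γ (p.1 * p.2)} ≃ {p : Γ × Γ // IsConj γ (p.1 * p.2)} :=
      { toFun := fun p => ⟨((p : Γ × Γ).2, (p : Γ × Γ).1),
          p.2.trans (isConj_mul_comm _ _)⟩
        invFun := fun p => ⟨((p : Γ × Γ).2, (p : Γ × Γ).1),
          p.2.trans (isConj_mul_comm _ _)⟩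
        left_inv := fun p => rfl
        right_inv := fun p => rfl }
    rw [← sw.tsum_eq (f := fun p : {p : Γ × Γ // IsConj γ (p.1 * p.2)} =>
        h (p : Γ × Γ).1 * f (p : Γ × Γ).2)]
    exact tsum_congr fun p => mul_comm _ _
end

section
/- Let G be a locally compact Hausdorff topological group, Γ a discrete subgroup of G, and f : G → ℂ a continuous function with compact support. Then the kernel function K : G × G → ℂ defined by K(x, y) = ∑_{γ∈Γ} f(x⁻¹ γ y) (for each (x,y) the sum has finitely many nonzero terms) is continuous on G × G. -/
/-!
Fix `(x₀, y₀)` and compact neighbourhoods `U ∋ x₀`, `V ∋ y₀`. If `f (x⁻¹ γ y) ≠ 0` with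
`x ∈ U`, `y ∈ V`, then `γ` lies in the compact set `U * tsupport f * V⁻¹`, which meets the closed
discrete subgroup `Γ` in finitely many points. So on `U × V` the kernel is a finite sum of
continuous functions, i.e. the family of summands has locally finite supports.
-/

open Set
open scoped Pointwise

namespace Subgroup

variable {G : Type*} [Group G] [TopologicalSpace G] [IsTopologicalGroup G] [T2Space G]
  {Γ : Subgroup G} [DiscreteTopology Γ]

theorem finite_preimage_coe_of_isCompact {K : Set G} (hK : IsCompact K) :
    ((↑) ⁻¹' K : Set Γ).Finite :=
  (isClosed_of_discrete.isClosedEmbedding_subtypeVal.isCompact_preimage hK).finite_of_discrete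

theorem locallyFinite_support_inv_mul_mul [LocallyCompactSpace G] {M : Type*} [Zero M]
    {f : G → M} (hf : HasCompactSupport f) :
    LocallyFinite fun γ : Γ => Function.support fun p : G × G => f (p.1⁻¹ * γ * p.2) := by
  rintro ⟨x₀, y₀⟩
  obtain ⟨U, hUc, hU⟩ := exists_compact_mem_nhds x₀
  obtain ⟨V, hVc, hV⟩ := exists_compact_mem_nhds y₀
  refine ⟨U ×ˢ V, prod_mem_nhds hU hV,
    (finite_preimage_coe_of_isCompact ((hUc.mul hf).mul hVc.inv)).subset ?_⟩
  rintro γ ⟨⟨x, y⟩, hγ, hx, hy⟩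
  have hγ_eq : (γ : G) = x * (x⁻¹ * γ * y) * y⁻¹ := by group
  rw [mem_preimage, hγ_eq]
  exact mul_mem_mul (mul_mem_mul hx (subset_tsupport f hγ)) (inv_mem_inv.2 hy)

end Subgroup

/-- If `Γ` is a discrete subgroup of a locally compact Hausdorff topological group `G`
and `f : G → ℂ` is continuous with compact support, then the kernel
`K(x, y) = ∑_{γ∈Γ} f(x⁻¹ γ y)` (a finite sum for each `(x, y)`) is continuous on `G × G`. -/
theorem kernel_continuous {G : Type*} [Group G] [TopologicalSpace G]
    [IsTopologicalGroup G] [LocallyCompactSpace G] [T2Space G]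
    (Γ : Subgroup G) [DiscreteTopology Γ]
    (f : G → ℂ) (hf : Continuous f) (hsupp : HasCompactSupport f) :
    Continuous (fun p : G × G => ∑ᶠ γ : Γ, f (p.1⁻¹ * γ * p.2)) :=
  continuous_finsum (fun _ => by fun_prop) (Γ.locallyFinite_support_inv_mul_mul hsupp)
end

section
/- Let G be a locally compact Hausdorff topological group and Γ a discrete cocompact subgroup of G (the quotient space Γ\G by the left multiplication action is compact). For f : G → ℂ continuous with compact support define Φ(f)(g) = ∑_{γ∈Γ} f(g⁻¹ γ). Then Φ is surjective onto continuous functions on the quotient: for every continuous left Γ-invariant function φ : G → ℂ, there exists f : G → ℂ continuous with compact support such that Φ(f)(g) = φ(g) for all g ∈ G. -/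
/-!
Choose a compact set `K` meeting every coset `xΓ` (cocompactness) and a Urysohn function
`h ≥ 0` with compact support and `h = 1` on `K`. Its periodization `H x = ∑_γ h (x γ)` is a
locally finite sum, hence continuous, right `Γ`-invariant and `≥ 1`. Then `f = h · ψ / H` with
`ψ x = φ x⁻¹` works, since `Φ(f)(g)` is the periodization of `f` at `g⁻¹` and `ψ / H` is
right `Γ`-invariant.
-/

open Set Function Pointwise Topology

theorem IsOpenMap.exists_isCompact_subset_image {X Y : Type*} [TopologicalSpace X]
    [TopologicalSpace Y] [WeaklyLocallyCompactSpace X] {f : X → Y} (hf : IsOpenMap f)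
    {L : Set Y} (hL : IsCompact L) (hLf : L ⊆ range f) :
    ∃ K, IsCompact K ∧ L ⊆ f '' K := by
  choose C hC hCx using exists_compact_mem_nhds (X := X)
  obtain ⟨t, ht⟩ := hL.elim_finite_subcover (fun x => f '' interior (C x))
    (fun x => hf _ isOpen_interior) fun _ hy => by
      obtain ⟨x, rfl⟩ := hLf hy
      exact mem_iUnion.2 ⟨x, mem_image_of_mem f (mem_interior_iff_mem_nhds.2 (hCx x))⟩
  refine ⟨⋃ x ∈ t, C x, t.isCompact_biUnion fun x _ => hC x, ht.trans ?_⟩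
  exact iUnion₂_subset fun x hx =>
    (image_mono interior_subset).trans (image_mono (subset_biUnion_of_mem (u := C) hx))

namespace Subgroup

variable {G : Type*} [Group G] (Γ : Subgroup G)

theorem exists_isCompact_forall_mul_mem [TopologicalSpace G] [IsTopologicalGroup G]
    [WeaklyLocallyCompactSpace G] [CompactSpace (Quotient (QuotientGroup.rightRel Γ))] :
    ∃ K : Set G, IsCompact K ∧ ∀ x : G, ∃ γ : Γ, x * γ ∈ K := by
  obtain ⟨K, hK, hKΓ⟩ := (MulAction.isOpenQuotientMap_quotientMk (Γ := Γ) (T := G)).isOpenMap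
    |>.exists_isCompact_subset_image isCompact_univ fun y _ => Quot.exists_rep y
  refine ⟨K⁻¹, hK.inv, fun x => ?_⟩
  obtain ⟨k, hk, hkx⟩ := hKΓ (mem_univ (Quotient.mk _ x⁻¹))
  obtain ⟨γ, hγ⟩ := Quotient.exact hkx
  exact ⟨γ⁻¹, by simpa [← hγ, Subgroup.smul_def] using hk⟩

theorem finite_coe_preimage_of_isCompact [TopologicalSpace G] [IsTopologicalGroup G] [T2Space G]
    [DiscreteTopology Γ] {S : Set G} (hS : IsCompact S) : (((↑) : Γ → G) ⁻¹' S).Finite :=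
  tendsto_cofinite_cocompact_iff.1
    (Γ.tendsto_coe_cofinite_of_discrete (isDiscrete_iff_discreteTopology.2 ‹_›)) S hS

noncomputable def periodize {M : Type*} [AddCommMonoid M] (h : G → M) (x : G) : M :=
  ∑ᶠ γ : Γ, h (x * γ)

section periodize

variable {Γ} {M : Type*} [AddCommMonoid M]

theorem periodize_mul (h : G → M) (x : G) (γ : Γ) :
    Γ.periodize h (x * γ) = Γ.periodize h x := by
  simp only [periodize, mul_assoc]
  exact finsum_comp_equiv (Equiv.mulLeft γ) (f := fun δ : Γ => h (x * δ))

theorem periodize_smul_of_mul_eq {R E : Type*} [Ring R] [IsDomain R] [AddCommGroup E]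
    [Module R E] [Module.IsTorsionFree R E] (h : G → R) {ψ : G → E}
    (hψ : ∀ (x : G) (γ : Γ), ψ (x * γ) = ψ x) (x : G) :
    Γ.periodize (fun y => h y • ψ y) x = Γ.periodize h x • ψ x := by
  simp only [periodize, hψ, finsum_smul]

variable [TopologicalSpace G] [IsTopologicalGroup G] [T2Space G] [WeaklyLocallyCompactSpace G]
  [DiscreteTopology Γ]

theorem locallyFinite_support_mul {h : G → M} (hh : HasCompactSupport h) :
    LocallyFinite fun γ : Γ => support fun x => h (x * γ) := by
  intro x
  obtain ⟨C, hC, hCx⟩ := exists_compact_mem_nhds x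
  refine ⟨C, hCx, (Γ.finite_coe_preimage_of_isCompact (hC.inv.mul hh)).subset ?_⟩
  rintro γ ⟨z, hz, hzC⟩
  exact ⟨z⁻¹, inv_mem_inv.2 hzC, z * γ, subset_tsupport _ hz, by group⟩

theorem continuous_periodize [TopologicalSpace M] [ContinuousAdd M] {h : G → M}
    (hc : Continuous h) (hh : HasCompactSupport h) : Continuous (Γ.periodize h) :=
  continuous_finsum (fun _ => hc.comp (continuous_mul_const _)) (locallyFinite_support_mul hh)

end periodize

end Subgroup

/-- Surjectivity of `Φ` onto continuous functions on the quotient: if `Γ` is a discrete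
cocompact subgroup of a locally compact Hausdorff group `G`, then every continuous left
`Γ`-invariant function `φ : G → ℂ` is of the form `Φ(f)(g) = ∑_{γ∈Γ} f(g⁻¹γ)` for some
continuous compactly supported `f : G → ℂ`. -/
theorem Phi_surjective {G : Type*} [Group G] [TopologicalSpace G]
    [IsTopologicalGroup G] [LocallyCompactSpace G] [T2Space G]
    (Γ : Subgroup G) [DiscreteTopology Γ]
    (hcocompact : CompactSpace (Quotient (QuotientGroup.rightRel Γ)))
    (φ : G → ℂ) (hφ : Continuous φ) (hφinv : ∀ (γ : Γ) (g : G), φ (γ * g) = φ g) :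
    ∃ f : G → ℂ, Continuous f ∧ HasCompactSupport f ∧
      ∀ g : G, ∑ᶠ γ : Γ, f (g⁻¹ * γ) = φ g := by
  obtain ⟨K, hK, hKΓ⟩ := Γ.exists_isCompact_forall_mul_mem
  obtain ⟨h, hK1, -, hh, h01⟩ :=
    exists_continuous_one_zero_of_isCompact hK isClosed_empty (disjoint_empty K)
  set H := Γ.periodize h
  have hH : ∀ x, H x ≠ 0 := fun x => by
    obtain ⟨γ, hγ⟩ := hKΓ x
    have hle : h (x * γ) ≤ H x := single_le_finsum γ
      ((Subgroup.locallyFinite_support_mul hh).point_finite x) fun _ => (h01 _).1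
    have h1 : h (x * γ) = 1 := hK1 hγ
    linarith
  set ψ : G → ℂ := fun x => (H x)⁻¹ • φ x⁻¹
  have hψ : ∀ (x : G) (γ : Γ), ψ (x * γ) = ψ x := fun x γ => by
    simp only [ψ, H, Subgroup.periodize_mul, mul_inv_rev, ← Subgroup.coe_inv, hφinv]
  refine ⟨fun x => h x • ψ x, ?_, hh.smul_right, fun g => ?_⟩
  · exact h.continuous.smul (((Subgroup.continuous_periodize h.continuous hh).inv₀ hH).smul
      (hφ.comp continuous_inv))
  · calc ∑ᶠ γ : Γ, h (g⁻¹ * γ) • ψ (g⁻¹ * γ) = H g⁻¹ • ψ g⁻¹ :=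
          Subgroup.periodize_smul_of_mul_eq h hψ g⁻¹
      _ = φ g := by simp only [ψ, smul_smul, mul_inv_cancel₀ (hH g⁻¹), one_smul, inv_inv]
end
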